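/- Let 1 ≤ p < ∞ and let X be a real Banach space. Then X is p-divisible if and only if for all finite-dimensional real Banach spaces A and B that are finitely representable in X, the direct sum A ⊕_p B (with norm ‖(a,b)‖ = (‖a‖^p + ‖b‖^p)^{1/p}) is finitely representable in X. -/

import Mathlib

open scoped ENNReal ZeroAtInfty

/-- A bundled real Banach space. -/
structure BanachSpace where
  carrier : Type
  [g : NormedAddCommGroup carrier]
  [s : NormedSpace ℝ carrier]
  [c : CompleteSpace carrier]

attribute [instance] BanachSpace.g BanachSpace.s BanachSpace.c

instance : CoeSort BanachSpace Type := ⟨BanachSpace.carrier⟩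

/-- `X` is finitely representable in `Y`: every finite-dimensional subspace of `X` is
`(1+ε)`-isomorphic to a subspace of `Y`. -/
def FinRep (X : Type*) [NormedAddCommGroup X] [NormedSpace ℝ X]
    (Y : Type*) [NormedAddCommGroup Y] [NormedSpace ℝ Y] : Prop :=
  ∀ ε : ℝ, 0 < ε → ∀ A : Subspace ℝ X, FiniteDimensional ℝ A →
    ∃ B : Subspace ℝ Y, ∃ u : A ≃L[ℝ] B,
      ‖(u : A →L[ℝ] B)‖ * ‖(u.symm : B →L[ℝ] A)‖ ≤ 1 + ε

/-- `X` and `Y` are finitely equivalent. -/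
def FinEquiv (X : Type*) [NormedAddCommGroup X] [NormedSpace ℝ X]
    (Y : Type*) [NormedAddCommGroup Y] [NormedSpace ℝ Y] : Prop :=
  FinRep X Y ∧ FinRep Y X

/-- `X` is `p`-divisible: some Banach space `Y` finitely equivalent to `X` has its
`ℓ_p`-sum `ℓ_p(Y)` finitely equivalent to `X`. -/
def PDivisible (p : ℝ≥0∞) (hp : 1 ≤ p) (X : Type*) [NormedAddCommGroup X]
    [NormedSpace ℝ X] : Prop :=
  haveI : Fact (1 ≤ p) := ⟨hp⟩
  ∃ Y : BanachSpace, FinEquiv X Y.carrier ∧ FinEquiv X (lp (fun _ : ℕ => Y.carrier) p)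

/-- `X` has a closed subspace isomorphic (linearly homeomorphic) to `Z`. -/
def HasClosedSubspaceIso (X : Type*) [NormedAddCommGroup X] [NormedSpace ℝ X]
    (Z : Type*) [NormedAddCommGroup Z] [NormedSpace ℝ Z] : Prop :=
  ∃ S : Subspace ℝ X, IsClosed (S : Set X) ∧ Nonempty (S ≃L[ℝ] Z)

/-- `X` has a closed subspace isomorphic to the classical space `ℓ_p`. -/
def HasLpSubspace (X : Type*) [NormedAddCommGroup X] [NormedSpace ℝ X]
    (p : ℝ≥0∞) (hp : 1 ≤ p) : Prop :=
  haveI : Fact (1 ≤ p) := ⟨hp⟩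
  HasClosedSubspaceIso X (lp (fun _ : ℕ => ℝ) p)

/-- The Tsirelson property: no closed subspace isomorphic to `ℓ_p` (`1 ≤ p < ∞`) or to `c₀`. -/
def TsirelsonProperty (X : Type*) [NormedAddCommGroup X] [NormedSpace ℝ X] : Prop :=
  (∀ (p : ℝ≥0∞) (hp : 1 ≤ p), p ≠ ∞ → ¬ HasLpSubspace X p hp) ∧
    ¬ HasClosedSubspaceIso X C₀(ℕ, ℝ)

/-!
If `X` is `p`-divisible through `Y`, then spaces finitely representable in `X` are finitely
representable in `Y`, and `A ⊕_p B` sits in `ℓ_p(Y)` on the first two coordinates with the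
distortions of `A` and `B` in `Y`; since `ℓ_p(Y)` is finitely representable in `X`, so is
`A ⊕_p B`.

Conversely, under the closure property `Y = X` works. A finite-dimensional subspace of `ℓ_p(X)` is
uniformly close to its truncation to the first `n` coordinates, and a finite-dimensional space of
sequences supported on `{0, …, n}` is isometric to the `ℓ_p`-sum of its image under the last
coordinate (a subspace of `X`) and its truncation to `{0, …, n - 1}`; by induction on `n` all these
spaces are finitely representable in `X`.
-/

open Filter Topology

section EmbedsWith

variable {X Y Z W : Type*} [NormedAddCommGroup X] [NormedSpace ℝ X]
  [NormedAddCommGroup Y] [NormedSpace ℝ Y] [NormedAddCommGroup Z] [NormedSpace ℝ Z]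
  [NormedAddCommGroup W] [NormedSpace ℝ W] {C D : ℝ}

/-- The normalised form of an isomorphism `u` onto a subspace with `‖u‖ * ‖u⁻¹‖ ≤ C`
(see `finRep_iff_embedsWith`). -/
def EmbedsWith (Z Y : Type*) [NormedAddCommGroup Z] [NormedSpace ℝ Z]
    [NormedAddCommGroup Y] [NormedSpace ℝ Y] (C : ℝ) : Prop :=
  ∃ T : Z →ₗ[ℝ] Y, ∀ x, ‖x‖ ≤ ‖T x‖ ∧ ‖T x‖ ≤ C * ‖x‖

theorem EmbedsWith.mono (h : EmbedsWith Z Y C) (hCD : C ≤ D) : EmbedsWith Z Y D :=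
  let ⟨T, hT⟩ := h
  ⟨T, fun x => ⟨(hT x).1, (hT x).2.trans (mul_le_mul_of_nonneg_right hCD (norm_nonneg x))⟩⟩

theorem LinearIsometry.embedsWith (f : Z →ₗᵢ[ℝ] Y) : EmbedsWith Z Y 1 :=
  ⟨f.toLinearMap, fun x => by simp⟩

theorem EmbedsWith.trans (hZY : EmbedsWith Z Y C) (hYW : EmbedsWith Y W D) (hD : 0 ≤ D) :
    EmbedsWith Z W (D * C) := by
  obtain ⟨T, hT⟩ := hZY
  obtain ⟨S, hS⟩ := hYW
  refine ⟨S ∘ₗ T, fun x => ⟨(hT x).1.trans (hS (T x)).1, ?_⟩⟩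
  calc ‖S (T x)‖ ≤ D * ‖T x‖ := (hS _).2
    _ ≤ D * (C * ‖x‖) := mul_le_mul_of_nonneg_left (hT x).2 hD
    _ = D * C * ‖x‖ := (mul_assoc _ _ _).symm

theorem finRep_iff_embedsWith :
    FinRep X Y ↔ ∀ A : Subspace ℝ X, FiniteDimensional ℝ A → ∀ C > 1, EmbedsWith A Y C := by
  constructor
  · intro h A hA C hC
    obtain ⟨B, u, hu⟩ := h (C - 1) (by linarith) A hA
    set k := ‖(u.symm : B →L[ℝ] A)‖
    have hnorm : ∀ x, ‖(k • (B.subtype ∘ₗ u.toLinearMap)) x‖ = k * ‖u x‖ := fun x => by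
      rw [LinearMap.smul_apply, norm_smul,
        Real.norm_of_nonneg (show 0 ≤ k from ContinuousLinearMap.opNorm_nonneg _)]
      rfl
    refine ⟨k • (B.subtype ∘ₗ u.toLinearMap), fun x => ⟨?_, ?_⟩⟩
    · calc ‖x‖ = ‖u.symm (u x)‖ := by rw [u.symm_apply_apply]
        _ ≤ k * ‖u x‖ := (u.symm : B →L[ℝ] A).le_opNorm _
        _ = _ := (hnorm x).symm
    · calc _ = k * ‖u x‖ := hnorm x
        _ ≤ k * (‖(u : A →L[ℝ] B)‖ * ‖x‖) :=
          mul_le_mul_of_nonneg_left ((u : A →L[ℝ] B).le_opNorm x)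
            (ContinuousLinearMap.opNorm_nonneg _)
        _ ≤ C * ‖x‖ := by
          rw [← mul_assoc, mul_comm k]
          exact mul_le_mul_of_nonneg_right (by linarith) (norm_nonneg _)
  · intro h ε hε A hA
    obtain ⟨T, hT⟩ := h A hA (1 + ε) (by linarith)
    have hinj : Function.Injective T := (injective_iff_map_eq_zero T).mpr fun x hx =>
      norm_le_zero_iff.mp (by simpa [hx] using (hT x).1)
    let u : A ≃L[ℝ] LinearMap.range T := (LinearEquiv.ofInjective T hinj).toContinuousLinearEquiv
    refine ⟨LinearMap.range T, u, ?_⟩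
    have hu : ‖(u : A →L[ℝ] LinearMap.range T)‖ ≤ 1 + ε :=
      ContinuousLinearMap.opNorm_le_bound _ (by linarith) fun x => (hT x).2
    have hu_symm : ‖(u.symm : LinearMap.range T →L[ℝ] A)‖ ≤ 1 :=
      ContinuousLinearMap.opNorm_le_bound _ zero_le_one fun y => by
        obtain ⟨x, rfl⟩ := u.surjective y
        rw [ContinuousLinearEquiv.coe_coe, u.symm_apply_apply, one_mul]
        exact (hT x).1
    simpa using mul_le_mul hu hu_symm (ContinuousLinearMap.opNorm_nonneg _) (by linarith)

theorem FinRep.embedsWith [FiniteDimensional ℝ Z] (h : FinRep Z Y) (hC : 1 < C) :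
    EmbedsWith Z Y C := by
  have hZ := (LinearIsometryEquiv.ofTop Z (⊤ : Submodule ℝ Z) rfl).symm.toLinearIsometry
  simpa using hZ.embedsWith.trans (finRep_iff_embedsWith.mp h ⊤ inferInstance C hC)
    (by linarith)

theorem FinRep.of_embedsWith (h : ∀ C > 1, EmbedsWith Z Y C) : FinRep Z Y :=
  finRep_iff_embedsWith.mpr fun A _ C hC => by
    simpa using A.subtypeₗᵢ.embedsWith.trans (h C hC) (by linarith)

theorem EmbedsWith.trans_finRep [FiniteDimensional ℝ Z] (hZY : EmbedsWith Z Y C)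
    (hYW : FinRep Y W) (hD : 1 < D) : EmbedsWith Z W (D * C) := by
  obtain ⟨T, hT⟩ := hZY
  have hZT : EmbedsWith Z (LinearMap.range T) C := ⟨T.rangeRestrict, hT⟩
  exact hZT.trans (finRep_iff_embedsWith.mp hYW _ inferInstance D hD) (by linarith)

theorem FinRep.trans (hXY : FinRep X Y) (hYZ : FinRep Y Z) : FinRep X Z := by
  refine finRep_iff_embedsWith.mpr fun A _ C hC => ?_
  have hs : 1 < √C := by rw [Real.lt_sqrt zero_le_one]; linarith
  simpa [Real.mul_self_sqrt (by linarith : (0 : ℝ) ≤ C)] using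
    (finRep_iff_embedsWith.mp hXY A ‹_› √C hs).trans_finRep hYZ hs

theorem LinearIsometry.finRep (f : X →ₗᵢ[ℝ] Y) : FinRep X Y :=
  finRep_iff_embedsWith.mpr fun A _ _ hC => (f.comp A.subtypeₗᵢ).embedsWith.mono hC.le

end EmbedsWith

section ProdLp

variable {p : ℝ≥0∞} {C : ℝ}

theorem WithLp.prod_norm_le_mul_of_le {α β α' β' : Type*} [SeminormedAddCommGroup α]
    [SeminormedAddCommGroup β] [SeminormedAddCommGroup α'] [SeminormedAddCommGroup β']
    (hp : 0 < p.toReal) (hC : 0 ≤ C) {x : WithLp p (α × β)} {y : WithLp p (α' × β')}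
    (hfst : ‖y.fst‖ ≤ C * ‖x.fst‖) (hsnd : ‖y.snd‖ ≤ C * ‖x.snd‖) : ‖y‖ ≤ C * ‖x‖ := by
  rw [WithLp.prod_norm_eq_add hp, WithLp.prod_norm_eq_add hp]
  calc (‖y.fst‖ ^ p.toReal + ‖y.snd‖ ^ p.toReal) ^ (1 / p.toReal)
      ≤ ((C * ‖x.fst‖) ^ p.toReal + (C * ‖x.snd‖) ^ p.toReal) ^ (1 / p.toReal) := by gcongr
    _ = C * (‖x.fst‖ ^ p.toReal + ‖x.snd‖ ^ p.toReal) ^ (1 / p.toReal) := by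
      rw [Real.mul_rpow hC (norm_nonneg _), Real.mul_rpow hC (norm_nonneg _), ← mul_add,
        Real.mul_rpow (by positivity) (by positivity), ← Real.rpow_mul hC,
        mul_one_div_cancel hp.ne', Real.rpow_one]

variable [Fact (1 ≤ p)] {A B E F Y : Type*} [NormedAddCommGroup A] [NormedSpace ℝ A]
  [NormedAddCommGroup B] [NormedSpace ℝ B] [NormedAddCommGroup E] [NormedSpace ℝ E]
  [NormedAddCommGroup F] [NormedSpace ℝ F] [NormedAddCommGroup Y] [NormedSpace ℝ Y]

theorem EmbedsWith.prodLp (hp : 0 < p.toReal) (hA : EmbedsWith A E C) (hB : EmbedsWith B F C)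
    (hC : 0 ≤ C) : EmbedsWith (WithLp p (A × B)) (WithLp p (E × F)) C := by
  obtain ⟨T, hT⟩ := hA
  obtain ⟨S, hS⟩ := hB
  refine ⟨(WithLp.linearEquiv p ℝ (E × F)).symm.toLinearMap ∘ₗ T.prodMap S ∘ₗ
    (WithLp.linearEquiv p ℝ (A × B)).toLinearMap, fun x => ⟨?_, ?_⟩⟩
  · simpa using WithLp.prod_norm_le_mul_of_le hp zero_le_one
      (by simpa using (hT x.fst).1) (by simpa using (hS x.snd).1)
  · exact WithLp.prod_norm_le_mul_of_le hp hC (hT x.fst).2 (hS x.snd).2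

theorem embedsWith_prodLp_lp (hp : 0 < p.toReal) :
    EmbedsWith (WithLp p (Y × Y)) (lp (fun _ : ℕ => Y) p) 1 := by
  refine ⟨lp.lsingle p 0 ∘ₗ WithLp.fstₗ p ℝ Y Y + lp.lsingle p 1 ∘ₗ WithLp.sndₗ p ℝ Y Y,
    fun x => ?_⟩
  have h := lp.norm_sum_single hp (fun i => if i = 0 then x.fst else x.snd) {0, 1}
  simp only [Finset.sum_pair zero_ne_one, if_pos, one_ne_zero, if_false] at h
  have : ‖lp.single (E := fun _ : ℕ => Y) p 0 x.fst + lp.single p 1 x.snd‖ = ‖x‖ := by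
    rw [WithLp.prod_norm_eq_add hp, ← h, ← Real.rpow_mul (norm_nonneg _),
      mul_one_div_cancel hp.ne', Real.rpow_one]
  simp [this]

theorem FinRep.prodLp_lp (hp : 0 < p.toReal) [FiniteDimensional ℝ A] [FiniteDimensional ℝ B]
    (hA : FinRep A Y) (hB : FinRep B Y) :
    FinRep (WithLp p (A × B)) (lp (fun _ : ℕ => Y) p) :=
  FinRep.of_embedsWith fun C hC => by
    simpa using ((hA.embedsWith hC).prodLp hp (hB.embedsWith hC) (by linarith)).trans
      (embedsWith_prodLp_lp hp) zero_le_one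

end ProdLp

theorem tendsto_clm_of_tendsto_apply {𝕜 E F ι : Type*} [NontriviallyNormedField 𝕜]
    [CompleteSpace 𝕜] [NormedAddCommGroup E] [NormedSpace 𝕜 E] [FiniteDimensional 𝕜 E]
    [NormedAddCommGroup F] [NormedSpace 𝕜 F] {l : Filter ι} {f : ι → E →L[𝕜] F}
    {g : E →L[𝕜] F} (h : ∀ y, Tendsto (fun i => f i y) l (𝓝 (g y))) : Tendsto f l (𝓝 g) := by
  -- along a basis of `E`, the operator-norm topology on `E →L[𝕜] F` is the product topology
  let e : (E →L[𝕜] F) ≃L[𝕜] (Fin (Module.finrank 𝕜 E) → F) :=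
    ((ContinuousLinearEquiv.ofFinrankEq (Module.finrank_fin_fun 𝕜).symm).arrowCongr
      (1 : F ≃L[𝕜] F)).trans (ContinuousLinearEquiv.piRing _)
  rw [e.toHomeomorph.isInducing.tendsto_nhds_iff]
  exact tendsto_pi_nhds.mpr fun _ => h _

namespace lp

variable {E : ℕ → Type*} [∀ i, NormedAddCommGroup (E i)] [∀ i, NormedSpace ℝ (E i)]
  {p : ℝ≥0∞}

noncomputable def truncₗ (n : ℕ) : lp E p →ₗ[ℝ] lp E p :=
  ∑ i ∈ Finset.range n, lp.lsingle p i ∘ₗ lp.evalₗ E p i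

theorem truncₗ_apply (n : ℕ) (f : lp E p) :
    truncₗ n f = ∑ i ∈ Finset.range n, lp.single p i (f i) := by
  simp [truncₗ]

theorem coeFn_truncₗ (n : ℕ) (f : lp E p) (i : ℕ) :
    truncₗ n f i = if i < n then f i else 0 := by
  simp only [truncₗ_apply, lp.coeFn_sum, Finset.sum_apply, lp.single_apply,
    Finset.sum_pi_single, Finset.mem_range]

theorem truncₗ_truncₗ (n : ℕ) (f : lp E p) : truncₗ n (truncₗ n f) = truncₗ n f :=
  lp.ext <| funext fun i => by simp only [coeFn_truncₗ]; split_ifs <;> rfl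

theorem norm_truncₗ_rpow (hp : 0 < p.toReal) (n : ℕ) (f : lp E p) :
    ‖truncₗ n f‖ ^ p.toReal = ∑ i ∈ Finset.range n, ‖f i‖ ^ p.toReal := by
  rw [truncₗ_apply]
  exact lp.norm_sum_single hp _ _

theorem norm_truncₗ_succ_rpow (hp : 0 < p.toReal) (n : ℕ) (f : lp E p) :
    ‖truncₗ (n + 1) f‖ ^ p.toReal = ‖f n‖ ^ p.toReal + ‖truncₗ n f‖ ^ p.toReal := by
  rw [norm_truncₗ_rpow hp, norm_truncₗ_rpow hp, Finset.sum_range_succ, add_comm]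

variable [Fact (1 ≤ p)]

theorem norm_truncₗ_le (hp : 0 < p.toReal) (n : ℕ) (f : lp E p) : ‖truncₗ n f‖ ≤ ‖f‖ := by
  have hcompl := lp.norm_compl_sum_single hp f (Finset.range n)
  rw [← truncₗ_apply, ← norm_truncₗ_rpow hp] at hcompl
  refine (Real.rpow_le_rpow_iff (norm_nonneg _) (norm_nonneg _) hp).mp ?_
  linarith [Real.rpow_nonneg (norm_nonneg (f - truncₗ n f)) p.toReal]

theorem tendsto_truncₗ (hp : p ≠ ∞) (f : lp E p) :
    Tendsto (fun n => truncₗ n f) atTop (𝓝 f) := by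
  simpa only [truncₗ_apply] using (lp.hasSum_single hp f).tendsto_sum_nat

theorem exists_norm_sub_truncₗ_le (hp : p ≠ ∞) (A : Subspace ℝ (lp E p))
    [FiniteDimensional ℝ A] {δ : ℝ} (hδ : 0 < δ) :
    ∃ n, ∀ f ∈ A, ‖f - truncₗ n f‖ ≤ δ * ‖f‖ := by
  let R : ℕ → A →L[ℝ] lp E p := fun n =>
    LinearMap.toContinuousLinearMap ((LinearMap.id - truncₗ n) ∘ₗ A.subtype)
  have hR : Tendsto R atTop (𝓝 0) := tendsto_clm_of_tendsto_apply fun f => by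
    have := (tendsto_truncₗ hp (f : lp E p)).const_sub (f : lp E p)
    rwa [sub_self] at this
  have hRnorm := (tendsto_zero_iff_norm_tendsto_zero (E := A →L[ℝ] lp E p)).mp hR
  obtain ⟨n, hn⟩ := (hRnorm.eventually (gt_mem_nhds hδ)).exists
  exact ⟨n, fun f hf => ((R n).le_opNorm ⟨f, hf⟩).trans
    (mul_le_mul_of_nonneg_right hn.le (norm_nonneg _))⟩

end lp

section ProdLpClosed

variable {p : ℝ≥0∞} [Fact (1 ≤ p)] {X : Type} [NormedAddCommGroup X] [NormedSpace ℝ X]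

def IsProdLpClosed (p : ℝ≥0∞) [Fact (1 ≤ p)] (X : Type) [NormedAddCommGroup X]
    [NormedSpace ℝ X] : Prop :=
  ∀ A B : BanachSpace, FiniteDimensional ℝ A.carrier → FiniteDimensional ℝ B.carrier →
    FinRep A.carrier X → FinRep B.carrier X → FinRep (WithLp p (A.carrier × B.carrier)) X

theorem PDivisible.isProdLpClosed (hp : 0 < p.toReal) (h : PDivisible p Fact.out X) :
    IsProdLpClosed p X := by
  obtain ⟨Y, hXY, hXlpY⟩ := h
  intro A B _ _ hA hB
  exact (FinRep.prodLp_lp hp (hA.trans hXY.1) (hB.trans hXY.1)).trans hXlpY.2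

namespace IsProdLpClosed

variable (H : IsProdLpClosed p X)
include H

theorem finRep_of_norm_rpow_eq (hp : 0 < p.toReal) {S E F : Type} [NormedAddCommGroup S]
    [NormedSpace ℝ S] [FiniteDimensional ℝ S] [NormedAddCommGroup E] [NormedSpace ℝ E]
    [NormedAddCommGroup F] [NormedSpace ℝ F] (φ : S →ₗ[ℝ] E) (ψ : S →ₗ[ℝ] F)
    (hφ : FinRep (LinearMap.range φ) X) (hψ : FinRep (LinearMap.range ψ) X)
    (hnorm : ∀ x, ‖x‖ ^ p.toReal = ‖φ x‖ ^ p.toReal + ‖ψ x‖ ^ p.toReal) : FinRep S X := by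
  let L : S →ₗᵢ[ℝ] WithLp p (LinearMap.range φ × LinearMap.range ψ) :=
    { toLinearMap := (WithLp.linearEquiv p ℝ _).symm.toLinearMap ∘ₗ
        φ.rangeRestrict.prod ψ.rangeRestrict
      norm_map' := fun x => by
        rw [WithLp.prod_norm_eq_add hp]
        change (‖φ x‖ ^ p.toReal + ‖ψ x‖ ^ p.toReal) ^ (1 / p.toReal) = ‖x‖
        rw [← hnorm, ← Real.rpow_mul (norm_nonneg _), mul_one_div_cancel hp.ne', Real.rpow_one] }
  exact L.finRep.trans (H ⟨_⟩ ⟨_⟩ inferInstance inferInstance hφ hψ)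

theorem finRep_of_truncₗ_eq (hp : 0 < p.toReal) (n : ℕ)
    (S : Subspace ℝ (lp (fun _ : ℕ => X) p)) [FiniteDimensional ℝ S]
    (hS : ∀ f ∈ S, lp.truncₗ n f = f) : FinRep S X := by
  induction n generalizing S with
  | zero =>
    have hS0 : ∀ x : S, x = 0 := fun x =>
      Subtype.ext (by simpa [lp.truncₗ] using (hS x x.2).symm)
    exact FinRep.of_embedsWith fun C _ => ⟨0, fun x => by simp [hS0 x]⟩
  | succ n ih =>
    refine H.finRep_of_norm_rpow_eq hp (lp.evalₗ _ p n ∘ₗ S.subtype) (lp.truncₗ n ∘ₗ S.subtype)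
      (Submodule.subtypeₗᵢ _).finRep (ih _ ?_) fun x => ?_
    · rintro _ ⟨x, rfl⟩
      exact lp.truncₗ_truncₗ n _
    · have h := lp.norm_truncₗ_succ_rpow hp n (x : lp (fun _ : ℕ => X) p)
      rw [hS x x.2] at h
      exact h

theorem lp_finRep (hp : p ≠ ∞) : FinRep (lp (fun _ : ℕ => X) p) X := by
  have hp' : 0 < p.toReal := (ENNReal.toReal_pos_iff_ne_top p).mpr hp
  refine finRep_iff_embedsWith.mpr fun A _ C hC => ?_
  have hs : 1 < √C := by rw [Real.lt_sqrt zero_le_one]; linarith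
  obtain ⟨n, hn⟩ := lp.exists_norm_sub_truncₗ_le hp A (δ := 1 - (√C)⁻¹)
    (by linarith [inv_lt_one_of_one_lt₀ hs])
  -- truncation costs a factor `√C`, finite representability of its image another `√C`
  let φ := lp.truncₗ n ∘ₗ A.subtype
  have hnorm : ∀ x : A,
      ‖(√C • φ.rangeRestrict) x‖ = √C * ‖lp.truncₗ n (x : lp (fun _ : ℕ => X) p)‖ := fun x => by
      rw [LinearMap.smul_apply, norm_smul, Real.norm_of_nonneg (Real.sqrt_nonneg C)]
      rfl
  have hA : EmbedsWith A (LinearMap.range φ) √C := by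
    refine ⟨√C • φ.rangeRestrict, fun x => ⟨?_, ?_⟩⟩
    · have h₁ := norm_le_norm_sub_add (x : lp (fun _ : ℕ => X) p) (lp.truncₗ n x)
      have h₂ := hn x x.2
      have h₃ : (√C)⁻¹ * ‖x‖ ≤ ‖lp.truncₗ n (x : lp (fun _ : ℕ => X) p)‖ := by
        change (√C)⁻¹ * ‖(x : lp (fun _ : ℕ => X) p)‖ ≤ _
        linarith
      calc ‖x‖ = √C * ((√C)⁻¹ * ‖x‖) := by field_simp
        _ ≤ √C * ‖lp.truncₗ n (x : lp (fun _ : ℕ => X) p)‖ := by gcongr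
        _ = _ := (hnorm x).symm
    · rw [hnorm x]
      exact mul_le_mul_of_nonneg_left (lp.norm_truncₗ_le hp' n _) (Real.sqrt_nonneg C)
  have hR : FinRep (LinearMap.range φ) X := H.finRep_of_truncₗ_eq hp' n _ <| by
    rintro _ ⟨x, rfl⟩
    exact lp.truncₗ_truncₗ n _
  simpa [Real.mul_self_sqrt (by linarith : (0 : ℝ) ≤ C)] using hA.trans_finRep hR hs

theorem pDivisible [CompleteSpace X] (hp : p ≠ ∞) : PDivisible p Fact.out X := by
  let single₀ : X →ₗᵢ[ℝ] lp (fun _ : ℕ => X) p :=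
    { toLinearMap := lp.lsingle (𝕜 := ℝ) (E := fun _ : ℕ => X) p 0
      norm_map' := lp.norm_single (E := fun _ : ℕ => X) (zero_lt_one.trans_le Fact.out) 0 }
  exact ⟨⟨X⟩, ⟨LinearIsometry.id.finRep, LinearIsometry.id.finRep⟩, single₀.finRep,
    H.lp_finRep hp⟩

end IsProdLpClosed

end ProdLpClosed

/-- `X` is `p`-divisible iff the `ℓ_p`-sum of every two finite-dimensional spaces finitely
representable in `X` is finitely representable in `X`. -/
theorem pDivisible_iff_prodLp_finRep
    (p : ℝ≥0∞) [Fact (1 ≤ p)] (hp : p ≠ ∞)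
    (X : Type) [NormedAddCommGroup X] [NormedSpace ℝ X] [CompleteSpace X] :
    PDivisible p Fact.out X ↔
      ∀ A B : BanachSpace, FiniteDimensional ℝ A.carrier → FiniteDimensional ℝ B.carrier →
        FinRep A.carrier X → FinRep B.carrier X →
          FinRep (WithLp p (A.carrier × B.carrier)) X :=
  ⟨PDivisible.isProdLpClosed ((ENNReal.toReal_pos_iff_ne_top p).mpr hp),
    fun H => IsProdLpClosed.pDivisible H hp⟩
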